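/- Let α_n : [0,1] → [0,1] be piecewise constant functions converging pointwise to a Borel function α, and let X^n be the corresponding ISBM solutions started at x with a common Brownian motion B. Then the family of laws of the pairs (X^n, B) on C([0,1], ℝ²) is tight. -/

import Mathlib

open MeasureTheory ProbabilityTheory Filter Set

noncomputable section

namespace ISBM

variable {Ω : Type*}

/-- The symmetric sign function, with `sgn 0 = 0`. -/
def sgn (x : ℝ) : ℝ := if 0 < x then 1 else if x < 0 then -1 else 0

/-- `B` is a standard Brownian motion started at `0` under `μ`:
measurable, a.s. continuous paths starting from `0`, Gaussian increments,
independent increments. -/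
def IsBrownianMotion {mΩ : MeasurableSpace Ω} (μ : Measure Ω) (B : ℝ → Ω → ℝ) : Prop :=
  (∀ t, Measurable (B t)) ∧
  (∀ᵐ ω ∂μ, B 0 ω = 0 ∧ Continuous fun t => B t ω) ∧
  (∀ s t : ℝ, 0 ≤ s → s ≤ t →
    Measure.map (fun ω => B t ω - B s ω) μ = gaussianReal 0 ((t - s).toNNReal)) ∧
  (∀ n : ℕ, ∀ t : ℕ → ℝ, 0 ≤ t 0 → Monotone t →
    iIndepFun
      (fun i : Fin n => fun ω => B (t (i + 1)) ω - B (t i) ω) μ)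

/-- `B` is a Brownian motion with respect to the filtration `F`. -/
def IsFBrownianMotion {mΩ : MeasurableSpace Ω} (μ : Measure Ω) (F : Filtration ℝ mΩ)
    (B : ℝ → Ω → ℝ) : Prop :=
  IsBrownianMotion μ B ∧ Adapted F B ∧
  ∀ s t : ℝ, 0 ≤ s → s ≤ t →
    Indep (MeasurableSpace.comap (fun ω => B t ω - B s ω) inferInstance) (F s) μ

/-- `I` is (a version of) the stochastic integral `∫ H dY`, characterised as the limit in
probability of left-point Riemann sums along dyadic partitions. -/
def IsStochIntegral {mΩ : MeasurableSpace Ω} (μ : Measure Ω) (H Y I : ℝ → Ω → ℝ) : Prop :=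
  (∀ ω, I 0 ω = 0) ∧
  ∀ t : ℝ, 0 ≤ t → TendstoInMeasure μ
    (fun n : ℕ => fun ω => ∑ i ∈ Finset.range (2 ^ n),
      H (t * i / 2 ^ n) ω * (Y (t * (i + 1) / 2 ^ n) ω - Y (t * i / 2 ^ n) ω))
    atTop (I t)

/-- The (Stieltjes) measure of the function `R` is carried by the set `Z`:
`R` is locally constant away from `Z` (on the positive half-line). -/
def CarriedBy (R : ℝ → ℝ) (Z : Set ℝ) : Prop :=
  ∀ s : ℝ, 0 ≤ s → s ∉ Z → ∃ ε > 0, ∀ u ∈ Ioo (s - ε) (s + ε), R u = R s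

/-- `L` is (a version of) the symmetric local time at `0` of `X`, characterised by the
symmetric Tanaka formula: `L ω` is a continuous nondecreasing (Stieltjes) function starting
at `0`, carried by the zero set of `X`, and
`|X t| = |X 0| + ∫_0^t sgn(X s) dX s + L t`. -/
def IsSymmLocalTimeAtZero {mΩ : MeasurableSpace Ω} (μ : Measure Ω) (X : ℝ → Ω → ℝ)
    (L : Ω → StieltjesFunction ℝ) : Prop :=
  (∀ᵐ ω ∂μ, (L ω) 0 = 0 ∧ (Continuous fun s => L ω s) ∧
    CarriedBy (fun s => L ω s) {s : ℝ | X s ω = 0}) ∧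
  ∃ I : ℝ → Ω → ℝ, IsStochIntegral μ (fun s ω => sgn (X s ω)) X I ∧
    ∀ t : ℝ, 0 ≤ t → ∀ᵐ ω ∂μ, |X t ω| = |X 0 ω| + I t ω + (L ω) t

/-- `X` is a solution of the inhomogeneous skew Brownian motion equation
`X t = x + B t + ∫_0^t (2 α s - 1) dL⁰_s(X)`, with symmetric local time `L`. -/
def IsISBMSolution {mΩ : MeasurableSpace Ω} (μ : Measure Ω) (α : ℝ → ℝ) (x : ℝ)
    (B X : ℝ → Ω → ℝ) (L : Ω → StieltjesFunction ℝ) : Prop :=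
  (∀ᵐ ω ∂μ, Continuous fun t => X t ω) ∧
  IsSymmLocalTimeAtZero μ X L ∧
  ∀ t : ℝ, 0 ≤ t → ∀ᵐ ω ∂μ,
    X t ω = x + B t ω + ∫ s in Ioc (0:ℝ) t, (2 * α s - 1) ∂(L ω).measure

/-- `M` is a continuous local martingale for the filtration `F`. -/
def IsContLocalMartingale {mΩ : MeasurableSpace Ω} (μ : Measure Ω) (F : Filtration ℝ mΩ)
    (M : ℝ → Ω → ℝ) : Prop :=
  (∀ᵐ ω ∂μ, Continuous fun t => M t ω) ∧
  ∃ τ : ℕ → Ω → ℝ, (∀ n, IsStoppingTime F (fun ω => (τ n ω : WithTop ℝ))) ∧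
    (∀ᵐ ω ∂μ, Tendsto (fun n => τ n ω) atTop atTop) ∧
    ∀ n, Martingale (fun t ω => M (min t (τ n ω)) ω) F μ

/-- `Y` is a continuous semimartingale: local martingale plus adapted continuous
finite-variation part. -/
def IsContSemimartingale {mΩ : MeasurableSpace Ω} (μ : Measure Ω) (F : Filtration ℝ mΩ)
    (Y : ℝ → Ω → ℝ) : Prop :=
  ∃ M A : ℝ → Ω → ℝ, IsContLocalMartingale μ F M ∧ Adapted F A ∧
    (∀ᵐ ω ∂μ, A 0 ω = 0 ∧ (Continuous fun t => A t ω) ∧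
      ∀ t : ℝ, 0 ≤ t → BoundedVariationOn (fun s => A s ω) (Icc 0 t)) ∧
    ∀ t ω, Y t ω = M t ω + A t ω

/-- The last zero of `Y (· ω)` before time `t` (with `sup ∅ = 0`). -/
def lastZero (Y : ℝ → Ω → ℝ) (t : ℝ) (ω : Ω) : ℝ :=
  sSup ({0} ∪ {s : ℝ | s ∈ Icc 0 t ∧ Y s ω = 0})

/-- `pk` is (a version of) the predictable projection of the bounded progressive
process `k`: it is adapted, left-continuous, and at every deterministic time `t`,
`pk t = E[k t | F_{t⁻}]`. -/
def IsPredictableProjection {mΩ : MeasurableSpace Ω} (μ : Measure Ω) (F : Filtration ℝ mΩ)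
    (k pk : ℝ → Ω → ℝ) : Prop :=
  Adapted F pk ∧
  (∀ᵐ ω ∂μ, ∀ t : ℝ, ContinuousWithinAt (fun s => pk s ω) (Iio t) t) ∧
  ∀ t : ℝ, 0 < t → pk t =ᵐ[μ] μ[k t | ⨆ s ∈ Iio t, F s]

/-- `Q` is the quadratic variation process of `X` (limit in probability of sums of
squared increments along dyadic partitions). -/
def HasQuadraticVariation {mΩ : MeasurableSpace Ω} (μ : Measure Ω) (X Q : ℝ → Ω → ℝ) : Prop :=
  ∀ t : ℝ, 0 ≤ t → TendstoInMeasure μ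
    (fun n : ℕ => fun ω => ∑ i ∈ Finset.range (2 ^ n),
      (X (t * (i + 1) / 2 ^ n) ω - X (t * i / 2 ^ n) ω) ^ 2)
    atTop (Q t)

/-- The intervals `(g n, d n)` form the excursion decomposition of the path `Y (· ω)`
away from `0`. -/
def IsExcursionDecomposition (Y : ℝ → Ω → ℝ) (g d : ℕ → Ω → ℝ) (ω : Ω) : Prop :=
  ({t : ℝ | 0 ≤ t ∧ Y t ω ≠ 0} = ⋃ n, Ioo (g n ω) (d n ω)) ∧
  (∀ n, 0 ≤ g n ω ∧ g n ω < d n ω ∧ Y (g n ω) ω = 0 ∧ Y (d n ω) ω = 0) ∧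
  (Pairwise fun m n => Disjoint (Ioo (g m ω) (d m ω)) (Ioo (g n ω) (d n ω)))

/-- The process obtained by attaching the sign `ξ n` to the excursion interval
`(g n, d n)`. -/
def excursionSign (g d : ℕ → Ω → ℝ) (ξ : ℕ → Ω → ℝ) (t : ℝ) (ω : Ω) : ℝ :=
  ∑' n, Set.indicator (Ioo (g n ω) (d n ω)) (fun _ => ξ n ω) t

/-- Number of upcrossings of the interval `[0, ε]` by the path `Y (· ω)` before time `t`. -/
def upcrossingCount (Y : ℝ → Ω → ℝ) (t ε : ℝ) (ω : Ω) : ℕ :=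
  sSup {n : ℕ | ∃ s u : ℕ → ℝ,
    (∀ i < n, 0 ≤ s i ∧ s i < u i ∧ u i ≤ t ∧ Y (s i) ω = 0 ∧ ε ≤ Y (u i) ω) ∧
    ∀ i j, i < j → j < n → u i < s j}

/-- The transition density `p^α(s,t;x,y)` of the inhomogeneous skew Brownian motion. -/
def pISBM (α : ℝ → ℝ) (s t x y : ℝ) : ℝ :=
  (∫ u in Ioo (0:ℝ) (t - s),
    ((1 + sgn y * (2 * α (s + u) - 1)) / 2) * (|y| / Real.pi) *
      (Real.exp (-(y ^ 2) / (2 * (t - (s + u)))) /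
        (Real.sqrt u * (t - s - u) ^ ((3 : ℝ) / 2))) * Real.exp (-(x ^ 2) / (2 * u))) +
  (1 / Real.sqrt (2 * Real.pi * (t - s))) *
    (Real.exp (-((y - x) ^ 2) / (2 * (t - s))) -
      Real.exp (-((y + x) ^ 2) / (2 * (t - s))) * (if 0 < x * y then 1 else 0))

/-- `X` is a nonnegative (local) submartingale of class `Σ`. -/
def IsClassSigma {mΩ : MeasurableSpace Ω} (μ : Measure Ω) (F : Filtration ℝ mΩ)
    (X : ℝ → Ω → ℝ) : Prop :=
  (∀ t ω, 0 ≤ X t ω) ∧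
  ∃ N A : ℝ → Ω → ℝ, IsContLocalMartingale μ F N ∧
    (∀ t ω, X t ω = N t ω + A t ω) ∧
    (∀ᵐ ω ∂μ, A 0 ω = 0 ∧ (Continuous fun t => A t ω) ∧
      MonotoneOn (fun t => A t ω) (Ici 0) ∧
      CarriedBy (fun s => A s ω) {s : ℝ | X s ω = 0})


open scoped Classical in
/-- The path `s ↦ (X s ω, B s ω)` on `[0,1]`, as a continuous map (junk value if the
path is not continuous). -/
def pathPair (X B : ℝ → Ω → ℝ) (ω : Ω) : C(Icc (0:ℝ) 1, ℝ × ℝ) :=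
  if h : Continuous (fun s : Icc (0:ℝ) 1 => (X (s : ℝ) ω, B (s : ℝ) ω)) then ⟨_, h⟩
  else ContinuousMap.const _ (0, 0)


/-!
The argument is pathwise. The local time `L` of `X = Xⁿ` only grows on the zero set of `X`, so
`X - B` is constant on every excursion interval of `X`. If `z ≤ z'` are the first and last zeros
of `X` in `[v, u]`, this gives `X u - X v = (B u - B v) + (B z - B z')`, hence the increments of
`Xⁿ` are bounded by twice the oscillation of `B`, uniformly in `n`. A compact set `K_B` carrying
all but `δ` of the law of the path of `B` then yields, by Arzelà–Ascoli, a compact set of pairs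
`(Xⁿ, B)` carrying all but `δ` of every law.
-/

def ConstOnExcursions (h f : ℝ → ℝ) : Prop :=
  ∀ ⦃p q : ℝ⦄, 0 ≤ p → p ≤ q → (∀ r ∈ Ioo p q, f r ≠ 0) → h p = h q

theorem CarriedBy.eq_of_mem_Ioo {R : ℝ → ℝ} {Z : Set ℝ} (hR : CarriedBy R Z) {p q : ℝ}
    (hp : 0 ≤ p) (hZ : ∀ r ∈ Ioo p q, r ∉ Z) {r r' : ℝ} (hr : r ∈ Ioo p q)
    (hr' : r' ∈ Ioo p q) : R r = R r' := by
  have hloc : IsLocallyConstant ((Ioo p q).domRestrict R) := by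
    refine (IsLocallyConstant.iff_eventually_eq _).2 fun s => ?_
    obtain ⟨ε, hε, hconst⟩ := hR s (hp.trans s.2.1.le) (hZ s s.2)
    have hnear : ∀ᶠ u in nhds (s : ℝ), R u = R s :=
      Filter.eventually_of_mem (Ioo_mem_nhds (by linarith) (by linarith)) hconst
    exact continuous_subtype_val.continuousAt.eventually hnear
  have := isPreconnected_iff_preconnectedSpace.1 (isPreconnected_Ioo (a := p) (b := q))
  exact hloc.apply_eq_of_preconnectedSpace ⟨r, hr⟩ ⟨r', hr'⟩

theorem _root_.StieltjesFunction.setIntegral_Ioc_eq_of_eq (L : StieltjesFunction ℝ) (g : ℝ → ℝ)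
    {a r r' : ℝ} (har : a ≤ r) (hrr' : r ≤ r') (hL : L r = L r') :
    ∫ s in Ioc a r', g s ∂L.measure = ∫ s in Ioc a r, g s ∂L.measure := by
  have hnull : L.measure (Ioc r r') = 0 := by simp [L.measure_Ioc, hL]
  rw [← Ioc_union_Ioc_eq_Ioc har hrr',
    Measure.restrict_union (Ioc_disjoint_Ioc_of_le le_rfl) measurableSet_Ioc,
    Measure.restrict_eq_zero.2 hnull, add_zero]

theorem constOnExcursions_of_carriedBy {f b g : ℝ → ℝ} {L : StieltjesFunction ℝ} {x : ℝ}
    (hf : Continuous f) (hb : Continuous b) (hL : CarriedBy L {s | f s = 0})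
    (heq : ∀ q : ℚ, 0 ≤ (q : ℝ) → f q = x + b q + ∫ s in Ioc 0 (q : ℝ), g s ∂L.measure) :
    ConstOnExcursions (f - b) f := by
  intro p q hp hpq hz
  rcases hpq.eq_or_lt with rfl | hpq
  · rfl
  obtain ⟨r₀, hr₀⟩ : ∃ r₀ : ℚ, (r₀ : ℝ) ∈ Ioo p q := exists_rat_btwn hpq
  have hA : ∀ r ∈ Ioo p q,
      ∫ s in Ioc 0 r, g s ∂L.measure = ∫ s in Ioc 0 (r₀ : ℝ), g s ∂L.measure := by
    intro r hr
    have hLr : L r = L r₀ := hL.eq_of_mem_Ioo hp hz hr hr₀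
    rcases le_total r r₀ with hle | hle
    · exact (L.setIntegral_Ioc_eq_of_eq g (hp.trans hr.1.le) hle hLr).symm
    · exact L.setIntegral_Ioc_eq_of_eq g (hp.trans hr₀.1.le) hle hLr.symm
  have hrat : EqOn (f - b) (fun _ => x + ∫ s in Ioc 0 (r₀ : ℝ), g s ∂L.measure)
      (Ioo p q ∩ range ((↑) : ℚ → ℝ)) := by
    rintro _ ⟨hr, r, rfl⟩
    simp only [Pi.sub_apply, heq r (hp.trans hr.1.le), hA r hr]
    ring
  have hIcc := hrat.of_subset_closure (hf.sub hb).continuousOn continuousOn_const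
    (inter_subset_left.trans Ioo_subset_Icc_self)
    ((closure_Ioo hpq.ne).symm.subset.trans <|
      closure_minimal (Rat.denseRange_cast.open_subset_closure_inter isOpen_Ioo) isClosed_closure)
  exact (hIcc ⟨le_rfl, hpq.le⟩).trans (hIcc ⟨hpq.le, le_rfl⟩).symm

/-- Between its first zero `z` and its last zero `z'` in `[v, u]`, `f` moves like `b`, so
`f u - f v = (b u - b v) + (b z - b z')`. -/
theorem ConstOnExcursions.abs_sub_le {f b : ℝ → ℝ} (hf : Continuous f)
    (h : ConstOnExcursions (f - b) f) {u v : ℝ} (hu : 0 ≤ u) (hv : 0 ≤ v) :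
    ∃ z ∈ uIcc u v, ∃ z' ∈ uIcc u v, |f u - f v| ≤ 2 * |b z - b z'| := by
  wlog hvu : v ≤ u generalizing u v
  · obtain ⟨z, hz, z', hz', hle⟩ := this hv hu (le_of_not_ge hvu)
    exact ⟨z, uIcc_comm u v ▸ hz, z', uIcc_comm u v ▸ hz', abs_sub_comm (f u) (f v) ▸ hle⟩
  rw [uIcc_of_ge hvu]
  set Z := Icc v u ∩ {s | f s = 0}
  rcases Z.eq_empty_or_nonempty with hZ | hZ
  · have hconst := h hv hvu fun r hr hr0 => hZ.subset ⟨Ioo_subset_Icc_self hr, hr0⟩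
    simp only [Pi.sub_apply] at hconst
    refine ⟨u, right_mem_Icc.2 hvu, v, left_mem_Icc.2 hvu, ?_⟩
    rw [show f u - f v = b u - b v by linarith]
    linarith [abs_nonneg (b u - b v)]
  have hZc : IsCompact Z := isCompact_Icc.inter_right (isClosed_eq hf continuous_const)
  obtain ⟨z, ⟨hzI, hz0⟩, hzmin⟩ := hZc.exists_isLeast hZ
  obtain ⟨z', ⟨hzI', hz0'⟩, hzmax⟩ := hZc.exists_isGreatest hZ
  have hv_z := h hv hzI.1 fun r hr hr0 =>
    (hzmin ⟨⟨hr.1.le, hr.2.le.trans hzI.2⟩, hr0⟩).not_gt hr.2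
  have hz'_u := h (hv.trans hzI'.1) hzI'.2 fun r hr hr0 =>
    (hzmax ⟨⟨hzI'.1.trans hr.1.le, hr.2.le⟩, hr0⟩).not_gt hr.1
  simp only [Pi.sub_apply, mem_ofPred_eq] at hv_z hz'_u hz0 hz0'
  have hsplit : f u - f v = (b u - b v) + (b z - b z') := by linarith
  rcases le_total |b u - b v| |b z - b z'| with hle | hle
  · exact ⟨z, hzI, z', hzI', by rw [hsplit]; linarith [abs_add_le (b u - b v) (b z - b z')]⟩
  · exact ⟨u, right_mem_Icc.2 hvu, v, left_mem_Icc.2 hvu,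
      by rw [hsplit]; linarith [abs_add_le (b u - b v) (b z - b z')]⟩

section ArzelaAscoli

theorem _root_.ContinuousMap.isCompact_closure_of_equicontinuous {X Y : Type*}
    [TopologicalSpace X] [CompactSpace X] [MetricSpace Y] {A : Set C(X, Y)} {s : Set Y}
    (hs : IsCompact s) (hA : ∀ f ∈ A, ∀ x, f x ∈ s)
    (hequi : Equicontinuous ((↑) : A → X → Y)) : IsCompact (closure A) := by
  let e := (ContinuousMap.isometryEquivBoundedOfCompact X Y).toHomeomorph
  rw [← e.isCompact_image, e.image_closure]
  refine BoundedContinuousFunction.arzela_ascoli s hs _ ?_ ?_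
  · rintro _ x ⟨f, hf, rfl⟩
    exact hA f hf x
  · refine hequi.comp fun f : e '' A => ⟨e.symm f, ?_⟩
    obtain ⟨g, hg, hgf⟩ := f.2
    simpa [← hgf] using hg

theorem _root_.IsCompact.uniformEquicontinuous_coe {X Z : Type*} [MetricSpace X]
    [CompactSpace X] [MetricSpace Z] {K : Set C(X, Z)} (hK : IsCompact K) :
    UniformEquicontinuous ((↑) : K → X → Z) := by
  have := isCompact_iff_compactSpace.1 hK
  have huc : UniformContinuous fun p : K × X => (p.1 : C(X, Z)) p.2 :=
    CompactSpace.uniformContinuous_of_continuous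
      (ContinuousEval.continuous_eval.comp (continuous_subtype_val.prodMap continuous_id))
  refine Metric.uniformEquicontinuous_iff.2 fun ε hε => ?_
  obtain ⟨δ, hδ, h⟩ := Metric.uniformContinuous_iff.1 huc ε hε
  refine ⟨δ, hδ, fun a b hab g => h (a := (g, a)) (b := (g, b)) ?_⟩
  simpa [Prod.dist_eq] using hab

variable {X Y Z : Type*} [MetricSpace X] [CompactSpace X] [MetricSpace Y] [ProperSpace Y]
  [MetricSpace Z]

def DominatedPaths (K : Set C(X, Z)) (x₀ : X) (y₀ : Y) (C : ℝ) : Set C(X, Y × Z) :=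
  {F | ContinuousMap.snd.comp F ∈ K ∧ (F x₀).1 = y₀ ∧
    ∀ u v, ∃ z z', dist z z' ≤ dist u v ∧ dist (F u).1 (F v).1 ≤ C * dist (F z).2 (F z').2}

theorem isCompact_closure_dominatedPaths {K : Set C(X, Z)} (hK : IsCompact K) (x₀ : X)
    (y₀ : Y) {C : ℝ} (hC : 0 ≤ C) : IsCompact (closure (DominatedPaths K x₀ y₀ C)) := by
  set Q := (fun p : C(X, Z) × X => p.1 p.2) '' (K ×ˢ univ)
  have hQ : IsCompact Q := (hK.prod isCompact_univ).image ContinuousEval.continuous_eval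
  have hsnd : ∀ F ∈ DominatedPaths K x₀ y₀ C, ∀ t, (F t).2 ∈ Q :=
    fun F hF t => ⟨(_, t), ⟨hF.1, trivial⟩, rfl⟩
  refine ContinuousMap.isCompact_closure_of_equicontinuous
    ((isCompact_closedBall y₀ (C * Metric.diam Q)).prod hQ)
    (fun F hF t => ⟨?_, hsnd F hF t⟩) ?_
  · obtain ⟨z, z', -, hle⟩ := hF.2.2 t x₀
    rw [Metric.mem_closedBall, ← hF.2.1]
    exact hle.trans (mul_le_mul_of_nonneg_left
      (Metric.dist_le_diam_of_mem hQ.isBounded (hsnd F hF z) (hsnd F hF z')) hC)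
  refine (Metric.uniformEquicontinuous_iff.2 fun ε hε => ?_).equicontinuous
  obtain ⟨δ, hδ, hKδ⟩ := Metric.uniformEquicontinuous_iff.1 hK.uniformEquicontinuous_coe
    (ε / (C + 2)) (by positivity)
  refine ⟨δ, hδ, fun u v huv F => ?_⟩
  obtain ⟨F, hF⟩ := F
  have hsndδ : ∀ a b, dist a b < δ → dist (F a).2 (F b).2 < ε / (C + 2) :=
    fun a b hab => hKδ a b hab ⟨_, hF.1⟩
  obtain ⟨z, z', hzz', hle⟩ := hF.2.2 u v
  rw [Prod.dist_eq]
  refine max_lt ?_ ((hsndδ u v huv).trans_le (div_le_self hε.le (by linarith)))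
  calc dist (F u).1 (F v).1 ≤ C * dist (F z).2 (F z').2 := hle
    _ ≤ C * (ε / (C + 2)) := mul_le_mul_of_nonneg_left (hsndδ z z' (hzz'.trans_lt huv)).le hC
    _ < ε := by
      rw [mul_div_assoc', div_lt_iff₀ (by positivity)]
      nlinarith

end ArzelaAscoli

theorem _root_.MeasureTheory.Measure.map_apply_le {α β : Type*} [MeasurableSpace α]
    [MeasurableSpace β] (μ : Measure α) (f : α → β) {s : Set β} (hs : MeasurableSet s) :
    μ.map f s ≤ μ (f ⁻¹' s) := by
  by_cases hf : AEMeasurable f μ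
  · exact (Measure.map_apply_of_aemeasurable hf hs).le
  · simp [Measure.map_of_not_aemeasurable hf]

theorem IsISBMSolution.ae_constOnExcursions {mΩ : MeasurableSpace Ω} {μ : Measure Ω}
    {α : ℝ → ℝ} {x : ℝ} {B X : ℝ → Ω → ℝ} {L : Ω → StieltjesFunction ℝ}
    (hX : IsISBMSolution μ α x B X L) (hB : IsBrownianMotion μ B) :
    ∀ᵐ ω ∂μ, (Continuous fun t => X t ω) ∧ (Continuous fun t => B t ω) ∧ X 0 ω = x ∧
      ConstOnExcursions (fun t => X t ω - B t ω) (fun t => X t ω) := by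
  obtain ⟨hXc, ⟨hL, -⟩, heq⟩ := hX
  have heqℚ : ∀ᵐ ω ∂μ, ∀ q : ℚ, 0 ≤ (q : ℝ) →
      X q ω = x + B q ω + ∫ s in Ioc 0 (q : ℝ), (2 * α s - 1) ∂(L ω).measure := by
    refine ae_all_iff.2 fun q => ?_
    by_cases hq : 0 ≤ (q : ℝ)
    · filter_upwards [heq q hq] with ω hω using fun _ => hω
    · exact Eventually.of_forall fun ω hq' => absurd hq' hq
  filter_upwards [hXc, hB.2.1, hL, heqℚ] with ω hXω hBω hLω hω
  obtain ⟨hB0, hBω⟩ := hBω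
  refine ⟨hXω, hBω, ?_, constOnExcursions_of_carriedBy hXω hBω hLω.2.2 hω⟩
  simpa [hB0] using hω 0 (by norm_num)

theorem pathPair_apply {X B : ℝ → Ω → ℝ} {ω : Ω} (hX : Continuous fun t => X t ω)
    (hB : Continuous fun t => B t ω) (s : Icc (0:ℝ) 1) :
    pathPair X B ω s = (X s ω, B s ω) := by
  have hpair : Continuous fun s : Icc (0:ℝ) 1 => (X s ω, B s ω) :=
    (hX.comp continuous_subtype_val).prodMk (hB.comp continuous_subtype_val)
  rw [pathPair, dif_pos hpair]
  rfl

theorem snd_comp_pathPair_eq {X X' B : ℝ → Ω → ℝ} {ω : Ω} (hX : Continuous fun t => X t ω)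
    (hX' : Continuous fun t => X' t ω) (hB : Continuous fun t => B t ω) :
    ContinuousMap.snd.comp (pathPair X B ω) = ContinuousMap.snd.comp (pathPair X' B ω) := by
  ext s
  simp [pathPair_apply hX hB, pathPair_apply hX' hB]

theorem pathPair_mem_dominatedPaths {X B : ℝ → Ω → ℝ} {ω : Ω} {x : ℝ}
    {K : Set C(Icc (0:ℝ) 1, ℝ)} (hX : Continuous fun t => X t ω)
    (hB : Continuous fun t => B t ω) (hX0 : X 0 ω = x)
    (hexc : ConstOnExcursions (fun t => X t ω - B t ω) (fun t => X t ω))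
    (hK : ContinuousMap.snd.comp (pathPair X B ω) ∈ K) :
    pathPair X B ω ∈ DominatedPaths K ⟨0, left_mem_Icc.2 zero_le_one⟩ x 2 := by
  refine ⟨hK, by simp [pathPair_apply hX hB, hX0], fun u v => ?_⟩
  obtain ⟨z, hz, z', hz', hle⟩ := hexc.abs_sub_le (b := fun t => B t ω) hX u.2.1 v.2.1
  refine ⟨⟨z, uIcc_subset_Icc u.2 v.2 hz⟩, ⟨z', uIcc_subset_Icc u.2 v.2 hz'⟩, ?_, ?_⟩
  · have := abs_sub_le_of_uIcc_subset_uIcc (uIcc_subset_uIcc hz hz')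
    rw [Subtype.dist_eq, Subtype.dist_eq, Real.dist_eq, Real.dist_eq, abs_sub_comm]
    rwa [abs_sub_comm (v : ℝ)] at this
  · simpa [pathPair_apply hX hB, Real.dist_eq] using hle

theorem isbm_tightness_general
    {mΩ : MeasurableSpace Ω} (μ : Measure Ω) [IsProbabilityMeasure μ]
    (αseq : ℕ → ℝ → ℝ)
    (x : ℝ) (B : ℝ → Ω → ℝ) (hB : IsBrownianMotion μ B)
    (X : ℕ → ℝ → Ω → ℝ) (Lseq : ℕ → Ω → StieltjesFunction ℝ)
    (hXn : ∀ n, IsISBMSolution μ (αseq n) x B (X n) (Lseq n)) :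
    ∀ δ : ℝ, 0 < δ → ∃ K : Set C(Icc (0:ℝ) 1, ℝ × ℝ), IsCompact K ∧
      ∀ n, @Measure.map Ω C(Icc (0:ℝ) 1, ℝ × ℝ) mΩ (borel _)
        (pathPair (X n) B) μ Kᶜ ≤ ENNReal.ofReal δ := by
  intro δ hδ
  let _ : MeasurableSpace C(Icc (0:ℝ) 1, ℝ × ℝ) := borel _
  have : BorelSpace C(Icc (0:ℝ) 1, ℝ × ℝ) := ⟨rfl⟩
  let _ : MeasurableSpace C(Icc (0:ℝ) 1, ℝ) := borel _
  have : BorelSpace C(Icc (0:ℝ) 1, ℝ) := ⟨rfl⟩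
  -- `Measure.map` along a map that is not a.e. measurable is `0`; otherwise the path of `B` is
  -- a.e. measurable as the second coordinate of one of the pairs.
  by_cases hmeas : ∃ n₀, AEMeasurable (pathPair (X n₀) B) μ
  swap
  · simp only [not_exists] at hmeas
    exact ⟨∅, isCompact_empty, fun n => by simp [Measure.map_of_not_aemeasurable (hmeas n)]⟩
  obtain ⟨n₀, hn₀⟩ := hmeas
  set bPath := ContinuousMap.snd.comp ∘ pathPair (X n₀) B
  have hbPath : AEMeasurable bPath μ :=
    (ContinuousMap.continuous_postcomp _).measurable.comp_aemeasurable hn₀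
  obtain ⟨KB, hKB, hνKB⟩ := isTightMeasureSet_iff_exists_isCompact_measure_compl_le.1
    (isTightMeasureSet_singleton (μ := μ.map bPath)) _ (ENNReal.ofReal_pos.2 hδ)
  set S := DominatedPaths KB ⟨0, left_mem_Icc.2 zero_le_one⟩ x 2
  refine ⟨closure S, isCompact_closure_dominatedPaths hKB _ _ zero_le_two, fun n => ?_⟩
  have hgood : ∀ᵐ ω ∂μ, bPath ω ∈ KB → pathPair (X n) B ω ∈ S := by
    filter_upwards [(hXn n).ae_constOnExcursions hB, (hXn n₀).ae_constOnExcursions hB]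
      with ω hω hω₀ hKB
    obtain ⟨hX, hBω, hX0, hexc⟩ := hω
    exact pathPair_mem_dominatedPaths hX hBω hX0 hexc (snd_comp_pathPair_eq hX hω₀.1 hBω ▸ hKB)
  calc _ ≤ μ (pathPair (X n) B ⁻¹' (closure S)ᶜ) :=
        Measure.map_apply_le μ _ isClosed_closure.measurableSet.compl
    _ ≤ μ (bPath ⁻¹' KBᶜ) :=
        measure_mono_ae (hgood.mono fun ω h hω hKB => hω (subset_closure (h hKB)))
    _ ≤ μ.map bPath KBᶜ := Measure.le_map_apply hbPath _
    _ ≤ ENNReal.ofReal δ := hνKB _ rfl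

/-- if `α_n` are piecewise constant, converging pointwise to `α`, and
`X^n` are the corresponding ISBM solutions started at `x` with the common Brownian
motion `B`, then the family of laws of `(X^n, B)` on `C([0,1], ℝ²)` is tight. -/
theorem isbm_tightness
    {mΩ : MeasurableSpace Ω} (μ : Measure Ω) [IsProbabilityMeasure μ]
    (αseq : ℕ → ℝ → ℝ) (α : ℝ → ℝ) (hα_meas : Measurable α)
    (hαn_range : ∀ n s, αseq n s ∈ Icc (0:ℝ) 1)
    (hpc : ∀ n, ∃ m : ℕ, 0 < m ∧ ∃ τ a : ℕ → ℝ, τ 0 = 0 ∧ τ m = 1 ∧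
      (∀ i < m, τ i < τ (i + 1)) ∧
      ∀ s, αseq n s = ∑ i ∈ Finset.range m,
        Set.indicator (Ico (τ i) (τ (i + 1))) (fun _ => a i) s)
    (hconv : ∀ t ∈ Icc (0:ℝ) 1, Tendsto (fun n => αseq n t) atTop (nhds (α t)))
    (x : ℝ) (B : ℝ → Ω → ℝ) (hB : IsBrownianMotion μ B)
    (X : ℕ → ℝ → Ω → ℝ) (Lseq : ℕ → Ω → StieltjesFunction ℝ)
    (hXn : ∀ n, IsISBMSolution μ (αseq n) x B (X n) (Lseq n))
    (hXn_meas : ∀ n t, Measurable (X n t)) :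
    ∀ δ : ℝ, 0 < δ → ∃ K : Set C(Icc (0:ℝ) 1, ℝ × ℝ), IsCompact K ∧
      ∀ n, @Measure.map Ω C(Icc (0:ℝ) 1, ℝ × ℝ) mΩ (borel _)
        (pathPair (X n) B) μ Kᶜ ≤ ENNReal.ofReal δ :=
  isbm_tightness_general μ αseq x B hB X Lseq hXn

end ISBM
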